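/- arXiv:2010.04358 — 2 statements merged into one kernel-verified Lean document; each statement's English description precedes it below -/
import Mathlib

section
/- Every Lagrangian Lie subalgebra l of d = g ⋉ g* (i.e., a Lie subalgebra that is isotropic of dimension dim g for the form ((x,α),(y,β)) = α(y) + β(x)) is of the form l(a,f) for some Lie subalgebra a of g and some skew cocycle f ∈ Z¹(a, a*); explicitly, a is the image of l under the first projection and f is determined by f(x) = α|_a for (x,α) ∈ l. -/
open Module LieAlgebra

variable {g : Type*} [LieRing g] [LieAlgebra ℂ g] [FiniteDimensional ℂ g]

/-- Coadjoint action of `g` on its dual. -/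
noncomputable def coad (x : g) (β : Dual ℂ g) : Dual ℂ g :=
  -(β ∘ₗ (ad ℂ g x : g →ₗ[ℂ] g))

/-- The bracket of `d = g ⋉ g*`. -/
noncomputable def dBracket (u v : g × Dual ℂ g) : g × Dual ℂ g :=
  (⁅u.1, v.1⁆, coad u.1 v.2 - coad v.1 u.2)

/-- The symmetric bilinear form `((x,α),(y,β)) = α(y) + β(x)` on `d`. -/
def dForm (u v : g × Dual ℂ g) : ℂ := u.2 v.1 + v.2 u.1

/-- Coadjoint action of a Lie subalgebra `a` on `a*`. -/
noncomputable def coadA (a : LieSubalgebra ℂ g) (x : a) (φ : Dual ℂ a) : Dual ℂ a :=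
  -(φ ∘ₗ (ad ℂ a x : a →ₗ[ℂ] a))

/-- `l(a,f) = {(x,α) : x ∈ a, α|_a = f(x)}`. -/
def lSet (a : LieSubalgebra ℂ g) (f : a →ₗ[ℂ] Dual ℂ a) : Set (g × Dual ℂ g) :=
  {p | ∃ x : a, p.1 = ↑x ∧ ∀ y : a, p.2 ↑y = f x y}

/-! Let `A` be the first projection of `W`. If `(0, α) ∈ W`, isotropy against every `(y, β) ∈ W`
gives `α y = 0`, so `α|_A` depends only on the first coordinate of `(x, α) ∈ W`; this defines
`f : A → A*` with `W ≤ l(A, f)`. Now `l(A, f)` is the kernel of the surjection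
`(x, α) ↦ α|_A - f x` from `A × g*` onto `A*`, so it has dimension `dim g = dim W` and equals `W`.
Skewness of `f` and the cocycle identity are then the isotropy and the bracket closure of
`l(A, f)`, evaluated on elements lying over `x, y ∈ A`. -/

theorem LinearMap.exists_comp_eq_of_surjective_of_ker_le {R M N P : Type*} [Ring R]
    [AddCommGroup M] [AddCommGroup N] [AddCommGroup P] [Module R M] [Module R N] [Module R P]
    {p : M →ₗ[R] N} (hp : Function.Surjective p) {F : M →ₗ[R] P}
    (h : LinearMap.ker p ≤ LinearMap.ker F) : ∃ f : N →ₗ[R] P, f ∘ₗ p = F :=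
  ⟨(LinearMap.ker p).liftQ F h ∘ₗ (p.quotKerEquivOfSurjective hp).symm.toLinearMap, by
    ext u
    simp⟩

section Lagrangian

variable {K V : Type*} [Field K] [AddCommGroup V] [Module K V]

def lSubmodule (A : Submodule K V) (f : A →ₗ[K] Dual K A) : Submodule K (V × Dual K V) :=
  (LinearMap.ker (A.subtype.dualMap ∘ₗ LinearMap.snd K A (Dual K V) -
    f ∘ₗ LinearMap.fst K A (Dual K V))).map (A.subtype.prodMap LinearMap.id)

variable {A : Submodule K V} {f : A →ₗ[K] Dual K A}

theorem mem_lSubmodule {p : V × Dual K V} :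
    p ∈ lSubmodule A f ↔ ∃ x : A, p.1 = x ∧ ∀ y : A, p.2 y = f x y := by
  simp only [lSubmodule, Submodule.mem_map, LinearMap.mem_ker, LinearMap.sub_apply,
    sub_eq_zero, LinearMap.ext_iff]
  constructor
  · rintro ⟨⟨x, α⟩, hα, rfl⟩
    exact ⟨x, rfl, hα⟩
  · rintro ⟨x, hx, hα⟩
    exact ⟨(x, p.2), hα, Prod.ext hx.symm rfl⟩

theorem finrank_lSubmodule [FiniteDimensional K V] :
    finrank K (lSubmodule A f) = finrank K V := by
  set T := A.subtype.dualMap ∘ₗ LinearMap.snd K A (Dual K V) - f ∘ₗ LinearMap.fst K A (Dual K V)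
  have hT : LinearMap.range T = ⊤ := by
    refine LinearMap.range_eq_top.mpr fun φ => ?_
    obtain ⟨α, hα⟩ := LinearMap.dualMap_surjective_of_injective A.injective_subtype φ
    exact ⟨(0, α), by simp [T, hα]⟩
  have hinj : Function.Injective (A.subtype.prodMap (LinearMap.id : Dual K V →ₗ[K] Dual K V)) :=
    A.injective_subtype.prodMap Function.injective_id
  have hker := T.finrank_range_add_finrank_ker
  rw [hT, finrank_top, Module.finrank_prod, Subspace.dual_finrank_eq,
    Subspace.dual_finrank_eq] at hker
  rw [lSubmodule, ← (Submodule.equivMapOfInjective _ hinj _).finrank_eq]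
  change finrank K (LinearMap.ker T) = _
  omega

theorem exists_mem_lSubmodule_fst_eq (x : A) : ∃ p ∈ lSubmodule A f, p.1 = x := by
  obtain ⟨α, hα⟩ := LinearMap.dualMap_surjective_of_injective A.injective_subtype (f x)
  exact ⟨(x, α), mem_lSubmodule.mpr ⟨x, rfl, fun y => by rw [← hα]; rfl⟩, rfl⟩

theorem snd_apply_eq_of_mem_lSubmodule {p : V × Dual K V} (hp : p ∈ lSubmodule A f) {x : A}
    (hx : p.1 = x) (y : A) : p.2 y = f x y := by
  obtain ⟨x', hx', hα⟩ := mem_lSubmodule.mp hp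
  obtain rfl : x' = x := Subtype.ext (hx'.symm.trans hx)
  exact hα y

theorem skew_of_isotropic_lSubmodule
    (hiso : ∀ u ∈ lSubmodule A f, ∀ v ∈ lSubmodule A f, u.2 v.1 + v.2 u.1 = 0) (x y : A) :
    f x y + f y x = 0 := by
  obtain ⟨u, hu, hux⟩ := exists_mem_lSubmodule_fst_eq (f := f) x
  obtain ⟨v, hv, hvy⟩ := exists_mem_lSubmodule_fst_eq (f := f) y
  rw [← snd_apply_eq_of_mem_lSubmodule hu hux, ← snd_apply_eq_of_mem_lSubmodule hv hvy,
    ← hux, ← hvy]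
  exact hiso u hu v hv

theorem exists_le_lSubmodule_of_isotropic (W : Submodule K (V × Dual K V))
    (hiso : ∀ u ∈ W, ∀ v ∈ W, u.2 v.1 + v.2 u.1 = 0) :
    ∃ f, W ≤ lSubmodule (W.map (LinearMap.fst K V (Dual K V))) f := by
  set A := W.map (LinearMap.fst K V (Dual K V))
  let p : W →ₗ[K] A := (LinearMap.fst K V (Dual K V)).submoduleMap W
  let F : W →ₗ[K] Dual K A := A.subtype.dualMap ∘ₗ LinearMap.snd K V (Dual K V) ∘ₗ W.subtype
  have hker : LinearMap.ker p ≤ LinearMap.ker F := by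
    intro u hu
    ext ⟨_, v, hv, rfl⟩
    have h0 : (u : V × Dual K V).1 = 0 := congrArg Subtype.val hu
    have hiso_uv := hiso u u.2 v hv
    rwa [h0, map_zero, add_zero] at hiso_uv
  obtain ⟨f, hf⟩ := LinearMap.exists_comp_eq_of_surjective_of_ker_le (M := W)
    (LinearMap.submoduleMap_surjective _ _) hker
  refine ⟨f, fun u hu => mem_lSubmodule.mpr ⟨p ⟨u, hu⟩, rfl, fun y => ?_⟩⟩
  exact (LinearMap.congr_fun (LinearMap.congr_fun hf ⟨u, hu⟩) y).symm

end Lagrangian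

section Lie

variable {L : Type*} [LieRing L] [LieAlgebra ℂ L]

def fstLieSubalgebra (W : Submodule ℂ (L × Dual ℂ L))
    (hbr : ∀ u ∈ W, ∀ v ∈ W, dBracket u v ∈ W) : LieSubalgebra ℂ L :=
  { W.map (LinearMap.fst ℂ L (Dual ℂ L)) with
    lie_mem' := by
      rintro _ _ ⟨u, hu, rfl⟩ ⟨v, hv, rfl⟩
      exact ⟨dBracket u v, hbr u hu v hv, rfl⟩ }

theorem coe_lSubmodule (a : LieSubalgebra ℂ L) (f : a →ₗ[ℂ] Dual ℂ a) :
    (lSubmodule a.toSubmodule f : Set (L × Dual ℂ L)) = lSet a f :=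
  Set.ext fun _ => mem_lSubmodule

theorem cocycle_of_bracket_mem_lSubmodule (a : LieSubalgebra ℂ L) (f : a →ₗ[ℂ] Dual ℂ a)
    (hbr : ∀ u ∈ lSubmodule a.toSubmodule f, ∀ v ∈ lSubmodule a.toSubmodule f,
      dBracket u v ∈ lSubmodule a.toSubmodule f) (x y : a) :
    coadA a x (f y) - coadA a y (f x) - f ⁅x, y⁆ = 0 := by
  obtain ⟨u, hu, hux⟩ := exists_mem_lSubmodule_fst_eq (f := f) x
  obtain ⟨v, hv, hvy⟩ := exists_mem_lSubmodule_fst_eq (f := f) y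
  have hw : (dBracket u v).1 = (⁅x, y⁆ : a) := by simp [dBracket, hux, hvy]
  ext z
  have hbz : (dBracket u v).2 z = f x ⁅y, z⁆ - f y ⁅x, z⁆ := by
    change -(v.2 ⁅u.1, (z : L)⁆) - -(u.2 ⁅v.1, (z : L)⁆) = _
    rw [hux, hvy, ← LieSubalgebra.coe_bracket, ← LieSubalgebra.coe_bracket,
      snd_apply_eq_of_mem_lSubmodule hu hux, snd_apply_eq_of_mem_lSubmodule hv hvy]
    ring
  change -(f y ⁅x, z⁆) - -(f x ⁅y, z⁆) - f ⁅x, y⁆ z = 0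
  rw [← snd_apply_eq_of_mem_lSubmodule (hbr u hu v hv) hw z, hbz]
  ring

end Lie

/-- Karolinsky–Stolin: every Lagrangian subalgebra `W` of `d = g ⋉ g*` (a subspace that is
closed under the bracket, isotropic, and of dimension `dim g`) is of the form `l(a,f)` for a
Lie subalgebra `a` of `g` and a skew cocycle `f ∈ Z¹(a,a*)`; moreover `a` is the image of `W`
under the first projection (and `f` is determined by `f(x) = α|_a` for `(x,α) ∈ W`, which is
implied by `W = l(a,f)`). -/
theorem lagrangian_subalgebra_eq_lSet (W : Submodule ℂ (g × Dual ℂ g))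
    (hbr : ∀ u ∈ W, ∀ v ∈ W, dBracket u v ∈ W)
    (hiso : ∀ u ∈ W, ∀ v ∈ W, dForm u v = 0)
    (hdim : Module.finrank ℂ W = Module.finrank ℂ g) :
    ∃ (a : LieSubalgebra ℂ g) (f : a →ₗ[ℂ] Dual ℂ a),
      (∀ x y : a, coadA a x (f y) - coadA a y (f x) - f ⁅x, y⁆ = 0) ∧
      (∀ x y : a, f x y + f y x = 0) ∧
      (W : Set (g × Dual ℂ g)) = lSet a f ∧
      (a : Set g) = Prod.fst '' (W : Set (g × Dual ℂ g)) := by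
  obtain ⟨f, hWf⟩ := exists_le_lSubmodule_of_isotropic W hiso
  have hW : W = lSubmodule _ f :=
    Submodule.eq_of_le_of_finrank_le hWf (by rw [finrank_lSubmodule, hdim])
  let a := fstLieSubalgebra W hbr
  refine ⟨a, f, cocycle_of_bracket_mem_lSubmodule a f (hW ▸ hbr),
    skew_of_isotropic_lSubmodule (hW ▸ hiso), (congrArg _ hW).trans (coe_lSubmodule a f),
    Submodule.map_coe _ _⟩
end

section
/- Let g be a complex semisimple Lie algebra with triangular decomposition g = n ⊕ h ⊕ n⁻, and let a be an abelian Lie subalgebra of g that is an ideal of its normalizer N_g(a) and satisfies n ⊕ h ⊆ N_g(a). Suppose a = a₀ ⊕ ⨁_{λ∈Λ} g_λ with a₀ ⊆ h and Λ ⊆ Φ. Then Λ contains no negative root; consequently a ⊆ n ⊕ h. -/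
open Module LieAlgebra

variable {g : Type*} [LieRing g] [LieAlgebra ℂ g] [FiniteDimensional ℂ g]
  [LieAlgebra.IsKilling ℂ g]

/-- The `λ`-root space `g_λ = {x ∈ g : [h, x] = λ(h) • x for all h ∈ H}`. -/
def rootSp (H : LieSubalgebra ℂ g) (lam : H → ℂ) : Submodule ℂ g where
  carrier := {x | ∀ h : H, ⁅(h : g), x⁆ = lam h • x}
  add_mem' := by intro x y hx hy h; simp [lie_add, hx h, hy h, smul_add]
  zero_mem' := by intro h; simp
  smul_mem' := by intro c x hx h; simp only [lie_smul, hx h, smul_comm c (lam h) x]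

/-- Let `a` be an abelian subalgebra of the complex semisimple Lie algebra `g` which is an
ideal of its normalizer `N_g(a)`, with `n ⊕ h ⊆ N_g(a)`, and suppose
`a = a₀ ⊕ ⨁_{λ ∈ Λ} g_λ` with `a₀ ⊆ h` and `Λ ⊆ Φ = Φ⁺ ⊔ Φ⁻`.  Then `Λ` contains no
negative root, and consequently `a ⊆ n ⊕ h`.  (Here `n = ⨁_{λ ∈ Φ⁺} g_λ`, the negative of a
negative root is positive, and for each positive root `λ` there is an `sl₂`-triple
`(e_λ, h_λ, f_λ)` with `e_λ ∈ g_λ`, `f_λ ∈ g_{−λ}`, `f_λ ≠ 0`, `h_λ = [e_λ, f_λ] ∈ h` and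
`[h_λ, f_λ] = −2 f_λ`.) -/
theorem abelian_ideal_no_negative_roots
    (H : LieSubalgebra ℂ g) [H.IsCartanSubalgebra]
    (Φp Φn : Set (H → ℂ))
    (hneg : ∀ μ ∈ Φn, -μ ∈ Φp)
    (hsl2 : ∀ lam ∈ Φp, ∃ e f h : g, e ∈ rootSp H lam ∧ f ∈ rootSp H (-lam) ∧ f ≠ 0 ∧
      h ∈ H ∧ ⁅e, f⁆ = h ∧ ⁅h, f⁆ = (-2 : ℂ) • f)
    (a a₀ : Submodule ℂ g) (Λ : Set (H → ℂ)) (hΛ : Λ ⊆ Φp ∪ Φn)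
    (habel : ∀ x ∈ a, ∀ y ∈ a, ⁅x, y⁆ = 0)
    (ha₀ : a₀ ≤ H.toSubmodule)
    (hdecomp : a = a₀ ⊔ ⨆ lam ∈ Λ, rootSp H lam)
    (hN : ∀ x ∈ H.toSubmodule ⊔ ⨆ lam ∈ Φp, rootSp H lam, ∀ y ∈ a, ⁅x, y⁆ ∈ a) :
    Λ ∩ Φn = ∅ ∧ a ≤ H.toSubmodule ⊔ ⨆ lam ∈ Φp, rootSp H lam := by
  have key : Λ ∩ Φn = ∅ := by
    by_contra hne
    obtain ⟨μ, hμΛ, hμn⟩ := Set.nonempty_iff_ne_empty.mpr hne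
    obtain ⟨e, f, h, he, hf, hf0, hhH, heq, hhf⟩ := hsl2 (-μ) (hneg μ hμn)
    rw [neg_neg] at hf
    have hfa : f ∈ a := by
      rw [hdecomp]
      exact Submodule.mem_sup_right
        (Submodule.mem_iSup_of_mem μ (Submodule.mem_iSup_of_mem hμΛ hf))
    have heN : e ∈ H.toSubmodule ⊔ ⨆ lam ∈ Φp, rootSp H lam :=
      Submodule.mem_sup_right
        (Submodule.mem_iSup_of_mem (-μ) (Submodule.mem_iSup_of_mem (hneg μ hμn) he))
    have hha : h ∈ a := heq ▸ hN e heN f hfa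
    have h0 : (-2 : ℂ) • f = 0 := by rw [← hhf]; exact habel h hha f hfa
    exact hf0 (by simpa using h0)
  refine ⟨key, ?_⟩
  rw [hdecomp]
  apply sup_le (le_trans ha₀ le_sup_left)
  apply iSup_le; intro lam; apply iSup_le; intro hlam
  have hp : lam ∈ Φp := by
    rcases hΛ hlam with hh | hh
    · exact hh
    · exact absurd (Set.mem_inter hlam hh) (by simp [key])
  exact le_trans (le_iSup₂ (f := fun lam _ => rootSp H lam) lam hp) le_sup_right
end
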